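/- arXiv:math/0501216 — 2 statements merged into one kernel-verified Lean document; each statement's English description precedes it below -/
import Mathlib

section
/- The coefficient θ_{k,r}(2) from the m=2 case admits the alternative expression of Grabner–Prodinger: Σ_{0 ≤ 2j ≤ k, 2j ≤ r} (−1)^j · k·(k−j−1)!/(j!·(k−r)!·(r−2j)!) · (p²−2)^{r−2j}·p^{2k−2r} = Σ_{λ=0}^{k} (−1)^λ · p^{2k−2λ} · k·(k−⌊λ/2⌋−1)!·2^{⌈λ/2⌉} / ((k−r)!·λ!·(r−λ)!) · ∏_{i=0}^{⌊λ/2⌋−1} (2k − 2⌈λ/2⌉ − 1 − 2i), for integers 1 ≤ r ≤ k, as polynomials in p. -/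
open Finset

def cc (l j : ℕ) : ℕ := l.choose (2*j) * (2*j).choose j * j.factorial

lemma cc_zero (l : ℕ) : cc l 0 = 1 := by simp [cc]

lemma cc_central (j : ℕ) : (2*j+2).choose (j+1) * (j+1) = 2*(2*j+1) * (2*j).choose j := by
  apply Nat.eq_of_mul_eq_mul_left (Nat.succ_pos j)
  have a := Nat.add_one_mul_choose_eq (2*j+1) j
  have b := Nat.add_one_mul_choose_eq (2*j) j
  have csym : (2*j+1).choose j = (2*j+1).choose (j+1) := by
    have h : j + 1 ≤ 2*j+1 := by omega
    have := Nat.choose_symm h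
    simpa [show 2*j+1 - (j+1) = j by omega] using this
  zify at a b csym ⊢
  linear_combination (-((j:ℤ)+1))*a - 2*((j:ℤ)+1)*b + 2*((j:ℤ)+1)^2*csym

lemma cc_rec (l j : ℕ) : cc (l+2) (j+1) = cc (l+1) (j+1) + 2*(l+1) * cc l j := by
  have pasc : (l+2).choose (2*j+2) = (l+1).choose (2*j+1) + (l+1).choose (2*j+2) :=
    Nat.choose_succ_succ (l+1) (2*j+1)
  have d := Nat.add_one_mul_choose_eq l (2*j)
  have hc := cc_central j
  unfold cc
  rw [show (2*(j+1)) = 2*j+2 by ring]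
  apply Nat.eq_of_mul_eq_mul_left (show 0 < 2*j+1 by omega)
  rw [Nat.factorial_succ]
  zify at pasc d hc ⊢
  linear_combination ((2*(j:ℤ)+1)*((2*j+2).choose (j+1))*((j:ℤ)+1)*(j.factorial : ℤ)) * pasc
    - (((2*j+2).choose (j+1) : ℤ)*((j:ℤ)+1)*(j.factorial : ℤ)) * d
    + (((l:ℤ)+1)*((l.choose (2*j)) : ℤ)*(j.factorial : ℤ)) * hc

lemma cc_eq_zero {l j : ℕ} (h : l < 2*j) : cc l j = 0 := by
  simp [cc, Nat.choose_eq_zero_of_lt h]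

def Fz (k l : ℕ) : ℤ :=
  ∑ j ∈ range (l/2+1), (-1)^j * cc l j * 2^(l-2*j) * (k-j-1).factorial

def Gz (k l : ℕ) : ℤ :=
  (k - l/2 - 1).factorial * 2^((l+1)/2) *
    ∏ i ∈ range (l/2), (2*(k:ℤ) - 2*(((l+1)/2 : ℕ):ℤ) - 1 - 2*(i:ℤ))

lemma Fz_ext (k l n : ℕ) (hn : l/2+1 ≤ n) :
    Fz k l = ∑ j ∈ range n, (-1)^j * cc l j * 2^(l-2*j) * ((k-j-1).factorial : ℤ) := by
  apply Finset.sum_subset (Finset.range_subset_range.2 hn)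
  intro x _ hx
  rw [Finset.mem_range, not_lt] at hx
  have : cc l x = 0 := cc_eq_zero (by omega)
  simp [this]

lemma Fz_rec (k l : ℕ) : Fz k (l+2) = 2 * Fz k (l+1) - 2*(l+1) * Fz (k-1) l := by
  have hx : Fz k (l+1) = ∑ j ∈ range (l/2+1+1), (-1)^j * cc (l+1) j * 2^(l+1-2*j) * ((k-j-1).factorial : ℤ) :=
    Fz_ext k (l+1) _ (by omega)
  have h2 : Fz k (l+2) = ∑ j ∈ range (l/2+1+1), (-1)^j * cc (l+2) j * 2^(l+2-2*j) * ((k-j-1).factorial : ℤ) :=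
    Fz_ext k (l+2) _ (by omega)
  have main : Fz k (l+2) - 2 * Fz k (l+1) = (-2*((l:ℤ)+1)) * Fz (k-1) l := by
    rw [h2, hx, Finset.mul_sum, ← Finset.sum_sub_distrib, Finset.sum_range_succ']
    have h0 : ((-1:ℤ))^0 * cc (l+2) 0 * 2^(l+2-2*0) * ((k-0-1).factorial : ℤ)
        - 2 * ((-1)^0 * cc (l+1) 0 * 2^(l+1-2*0) * ((k-0-1).factorial : ℤ)) = 0 := by
      simp only [pow_zero, cc_zero, Nat.cast_one, mul_one, one_mul, Nat.mul_zero, Nat.sub_zero]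
      rw [show l+2 = (l+1)+1 from rfl, pow_succ]
      ring
    rw [h0, add_zero]
    have key : ∀ j ∈ range (l/2+1),
        (-1)^(j+1) * (cc (l+2) (j+1) : ℤ) * 2^(l+2-2*(j+1)) * ((k-(j+1)-1).factorial : ℤ)
        - 2 * ((-1)^(j+1) * cc (l+1) (j+1) * 2^(l+1-2*(j+1)) * ((k-(j+1)-1).factorial : ℤ))
        = (-2*((l:ℤ)+1)) * ((-1)^j * cc l j * 2^(l-2*j) * ((k-1-j-1).factorial : ℤ)) := by
      intro j hj
      rw [Finset.mem_range] at hj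
      have hkj : k - (j+1) - 1 = k - 1 - j - 1 := by omega
      have hrec := cc_rec l j
      by_cases hcase : 2*(j+1) ≤ l+1
      · have e1 : l+2-2*(j+1) = l-2*j := by omega
        have e2 : l+1-2*(j+1) + 1 = l-2*j := by omega
        have e3 : (2:ℤ)^(l-2*j) = 2 * 2^(l+1-2*(j+1)) := by
          rw [← e2, pow_succ]; ring
        rw [hkj, e1, e3]
        push_cast [hrec]
        ring
      · have hz : cc (l+1) (j+1) = 0 := cc_eq_zero (by omega)
        have e1 : l+2-2*(j+1) = 0 := by omega
        have e4 : l-2*j = 0 := by omega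
        rw [hkj, hz, e1, e4]
        push_cast [hrec, hz]
        ring
    rw [Finset.sum_congr rfl key, ← Finset.mul_sum]
    unfold Fz
    congr 1
  linarith [main]

lemma Gz_even (k m : ℕ) (hk : 2*m+2 ≤ k) :
    Gz k (2*m+2) = 2 * Gz k (2*m+1) - 2*(2*(m:ℤ)+1) * Gz (k-1) (2*m) := by
  unfold Gz
  simp only [show (2*m+2)/2 = m+1 from by omega, show (2*m+2+1)/2 = m+1 from by omega,
    show (2*m+1)/2 = m from by omega, show (2*m+1+1)/2 = m+1 from by omega,
    show (2*m)/2 = m from by omega,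
    show k-1-m-1 = k-m-2 from by omega, show k-(m+1)-1 = k-m-2 from by omega,
    show k-m-1 = (k-m-2)+1 from by omega]
  rw [Nat.factorial_succ, Finset.prod_range_succ]
  have hprod : (∏ i ∈ range m, (2*((k-1:ℕ):ℤ) - 2*((m:ℕ):ℤ) - 1 - 2*(i:ℤ)))
      = ∏ i ∈ range m, (2*(k:ℤ) - 2*(((m+1:ℕ)):ℤ) - 1 - 2*(i:ℤ)) := by
    apply Finset.prod_congr rfl
    intro i _
    have h1 : ((k-1:ℕ):ℤ) = (k:ℤ) - 1 := by omega
    rw [h1]; push_cast; ring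
  rw [hprod]
  have hc : ((k-m-2:ℕ):ℤ) = (k:ℤ) - m - 2 := by omega
  push_cast [hc]
  ring

lemma Gz_odd (k m : ℕ) (hk : 2*m+3 ≤ k) :
    Gz k (2*m+3) = 2 * Gz k (2*m+2) - 2*(2*(m:ℤ)+2) * Gz (k-1) (2*m+1) := by
  unfold Gz
  simp only [show (2*m+3)/2 = m+1 from by omega, show (2*m+3+1)/2 = m+2 from by omega,
    show (2*m+2)/2 = m+1 from by omega, show (2*m+2+1)/2 = m+1 from by omega,
    show (2*m+1)/2 = m from by omega, show (2*m+1+1)/2 = m+1 from by omega,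
    show k-1-m-1 = k-m-2 from by omega, show k-(m+1)-1 = k-m-2 from by omega]
  rw [Finset.prod_range_succ, Finset.prod_range_succ']
  have hprod : (∏ i ∈ range m, (2*(k:ℤ) - 2*(((m+1:ℕ)):ℤ) - 1 - 2*((i+1:ℕ):ℤ)))
      = ∏ i ∈ range m, (2*(k:ℤ) - 2*(((m+2:ℕ)):ℤ) - 1 - 2*(i:ℤ)) := by
    apply Finset.prod_congr rfl
    intro i _
    push_cast; ring
  have hprod2 : (∏ i ∈ range m, (2*((k-1:ℕ):ℤ) - 2*(((m+1:ℕ)):ℤ) - 1 - 2*(i:ℤ)))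
      = ∏ i ∈ range m, (2*(k:ℤ) - 2*(((m+2:ℕ)):ℤ) - 1 - 2*(i:ℤ)) := by
    apply Finset.prod_congr rfl
    intro i _
    have h1 : ((k-1:ℕ):ℤ) = (k:ℤ) - 1 := by omega
    rw [h1]; push_cast; ring
  rw [hprod, hprod2]
  push_cast
  ring

lemma core (l : ℕ) : ∀ k, l ≤ k → Fz k l = Gz k l := by
  induction l using Nat.strong_induction_on with
  | _ l ih =>
    match l with
    | 0 =>
      intro k _
      simp [Fz, Gz, cc]
    | 1 =>
      intro k _
      norm_num [Fz, Gz, cc, mul_comm]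
    | (n+2) =>
      intro k hk
      rw [Fz_rec, ih (n+1) (by omega) k (by omega), ih n (by omega) (k-1) (by omega)]
      obtain ⟨m, rfl | rfl⟩ := Nat.even_or_odd' n
      · have := Gz_even k m (by omega)
        rw [show 2*m+2 = 2*m+1+1 from rfl] at this
        push_cast at this ⊢
        linarith [this]
      · have := Gz_odd k m (by omega)
        push_cast at this ⊢
        linarith [this]

lemma cc_mul_fact {l j : ℕ} (h : 2*j ≤ l) :
    (cc l j) * (j.factorial * (l-2*j).factorial) = l.factorial := by
  unfold cc
  have h1 := Nat.choose_mul_factorial_mul_factorial h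
  have h2 := Nat.choose_mul_factorial_mul_factorial (show j ≤ 2*j by omega)
  have h3 : 2*j - j = j := by omega
  rw [h3] at h2
  calc l.choose (2*j) * (2*j).choose j * j.factorial * (j.factorial * (l-2*j).factorial)
      = l.choose (2*j) * ((2*j).choose j * j.factorial * j.factorial) * (l-2*j).factorial := by ring
    _ = l.choose (2*j) * (2*j).factorial * (l-2*j).factorial := by rw [h2]
    _ = l.factorial := h1

lemma tri (r : ℕ) (f : ℕ → ℕ → ℝ) :
    ∑ j ∈ range (r/2+1), ∑ i ∈ range (r - 2*j + 1), f j i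
    = ∑ l ∈ range (r+1), ∑ j ∈ range (l/2+1), f j (r - l) := by
  rw [Finset.sum_sigma', Finset.sum_sigma']
  apply Finset.sum_nbij' (fun q => ⟨r - q.2, q.1⟩) (fun q => ⟨q.2, r - q.1⟩)
  · rintro ⟨j, i⟩ hq
    simp only [Finset.mem_sigma, Finset.mem_range] at hq ⊢
    omega
  · rintro ⟨l, j⟩ hq
    simp only [Finset.mem_sigma, Finset.mem_range] at hq ⊢
    omega
  · rintro ⟨j, i⟩ hq
    simp only [Finset.mem_sigma, Finset.mem_range] at hq
    have : r - (r - i) = i := by omega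
    simp [this]
  · rintro ⟨l, j⟩ hq
    simp only [Finset.mem_sigma, Finset.mem_range] at hq
    have : r - (r - l) = l := by omega
    simp [this]
  · rintro ⟨j, i⟩ hq
    simp only [Finset.mem_sigma, Finset.mem_range] at hq
    have : r - (r - i) = i := by omega
    simp [this]

/-- The two expressions for `θ_{k,r}(2)` coincide: the one from Theorem 1 and
the one of Grabner–Prodinger, for all real `p` (summands with a negative
factorial argument, i.e. `λ > r`, are omitted). -/
theorem stmt_12 (k r : ℕ) (hr : 1 ≤ r) (hrk : r ≤ k) (p : ℝ) :
    ∑ j ∈ Finset.range (r / 2 + 1),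
        ((-1 : ℝ) ^ j * k * (k - j - 1).factorial / (j.factorial * (k - r).factorial * (r - 2 * j).factorial)) *
          (p ^ 2 - 2) ^ (r - 2 * j) * p ^ (2 * k - 2 * r) =
      ∑ l ∈ Finset.range (k + 1),
        if l ≤ r then
          (-1 : ℝ) ^ l * p ^ (2 * k - 2 * l) *
            (k * (k - l / 2 - 1).factorial * 2 ^ ((l + 1) / 2) /
              ((k - r).factorial * l.factorial * (r - l).factorial)) *
            ∏ i ∈ Finset.range (l / 2),
              (2 * (k : ℝ) - 2 * ((l + 1) / 2 : ℕ) - 1 - 2 * i)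
        else 0 := by
  have hk1 : 1 ≤ k := le_trans hr hrk
  set T : ℕ → ℕ → ℝ := fun j i =>
    ((-1 : ℝ) ^ j * k * (k - j - 1).factorial /
        (j.factorial * (k - r).factorial * (r - 2 * j).factorial)) *
      ((p^2)^i * (-2:ℝ)^(r-2*j-i) * ((r-2*j).choose i)) * p ^ (2 * k - 2 * r) with hT
  have step1 : ∑ j ∈ Finset.range (r / 2 + 1),
      ((-1 : ℝ) ^ j * k * (k - j - 1).factorial / (j.factorial * (k - r).factorial * (r - 2 * j).factorial)) *
        (p ^ 2 - 2) ^ (r - 2 * j) * p ^ (2 * k - 2 * r)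
      = ∑ j ∈ range (r/2+1), ∑ i ∈ range (r - 2*j + 1), T j i := by
    apply Finset.sum_congr rfl
    intro j _
    rw [show ((p:ℝ)^2 - 2) = p^2 + (-2) by ring, add_pow, Finset.mul_sum, Finset.sum_mul]
  rw [step1, tri]
  have step2 : ∑ l ∈ Finset.range (k + 1),
      (if l ≤ r then
          (-1 : ℝ) ^ l * p ^ (2 * k - 2 * l) *
            (k * (k - l / 2 - 1).factorial * 2 ^ ((l + 1) / 2) /
              ((k - r).factorial * l.factorial * (r - l).factorial)) *
            ∏ i ∈ Finset.range (l / 2),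
              (2 * (k : ℝ) - 2 * ((l + 1) / 2 : ℕ) - 1 - 2 * i)
        else 0)
      = ∑ l ∈ Finset.range (r + 1),
          (-1 : ℝ) ^ l * p ^ (2 * k - 2 * l) *
            (k * (k - l / 2 - 1).factorial * 2 ^ ((l + 1) / 2) /
              ((k - r).factorial * l.factorial * (r - l).factorial)) *
            ∏ i ∈ Finset.range (l / 2),
              (2 * (k : ℝ) - 2 * ((l + 1) / 2 : ℕ) - 1 - 2 * i) := by
    rw [← Finset.sum_subset (Finset.range_subset_range.2 (by omega : r+1 ≤ k+1))]
    · apply Finset.sum_congr rfl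
      intro l hl
      rw [Finset.mem_range] at hl
      rw [if_pos (by omega)]
    · intro x hx hnx
      rw [Finset.mem_range] at hx hnx
      rw [if_neg (by omega)]
  rw [step2]
  apply Finset.sum_congr rfl
  intro l hl
  rw [Finset.mem_range] at hl
  have hlr : l ≤ r := by omega
  have hlk : l ≤ k := le_trans hlr hrk
  have key : ∀ j ∈ range (l/2+1), T j (r-l)
      = ((-1:ℝ)^l * p^(2*k-2*l) * ((k:ℝ) / ((k-r).factorial * l.factorial * (r-l).factorial)))
        * ((-1:ℝ)^j * cc l j * 2^(l-2*j) * ((k-j-1).factorial : ℝ)) := by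
    intro j hj
    rw [Finset.mem_range] at hj
    have h2j : 2*j ≤ l := by omega
    simp only [hT]
    have e1 : r-2*j-(r-l) = l-2*j := by omega
    have e2 : (r-2*j).choose (r-l) = (r-2*j).choose (l-2*j) := by
      rw [← Nat.choose_symm (show l-2*j ≤ r-2*j by omega)]
      congr 1
      omega
    have e4 : ((-1:ℝ))^(l-2*j) = (-1)^l := by
      rcases Nat.even_or_odd l with he | ho
      · have h1 : Even (l-2*j) := by obtain ⟨t, ht⟩ := he; exact ⟨t-j, by omega⟩
        rw [he.neg_one_pow, h1.neg_one_pow]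
      · have h1 : Odd (l-2*j) := by obtain ⟨t, ht⟩ := ho; exact ⟨t-j, by omega⟩
        rw [ho.neg_one_pow, h1.neg_one_pow]
    have e3 : (-2:ℝ)^(l-2*j) = (-1:ℝ)^l * 2^(l-2*j) := by
      rw [show (-2:ℝ) = -1*2 by norm_num, mul_pow, e4]
    have e5 : p^(2*k-2*r) * (p^2)^(r-l) = p^(2*k-2*l) := by
      rw [← pow_mul, ← pow_add]
      congr 1
      omega
    have f1 : (cc l j : ℝ) * ((j.factorial : ℝ) * ((l-2*j).factorial : ℝ)) = (l.factorial : ℝ) := by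
      exact_mod_cast congrArg (Nat.cast (R := ℝ)) (cc_mul_fact h2j)
    have f2 : (((r-2*j).choose (l-2*j) : ℕ) : ℝ) * (((l-2*j).factorial : ℝ) * ((r-l).factorial : ℝ))
        = ((r-2*j).factorial : ℝ) := by
      have h := Nat.choose_mul_factorial_mul_factorial (show l-2*j ≤ r-2*j by omega)
      rw [show r-2*j-(l-2*j) = r-l by omega] at h
      push_cast [← h]
      ring
    rw [e1, e2]
    have hne : ∀ n : ℕ, ((n.factorial : ℝ)) ≠ 0 := fun n =>
      Nat.cast_ne_zero.2 (Nat.factorial_ne_zero n)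
    have hcc : (cc l j : ℝ) ≠ 0 := by
      have : 0 < cc l j := by
        unfold cc
        exact Nat.mul_pos (Nat.mul_pos (Nat.choose_pos h2j) (Nat.choose_pos (by omega))) (Nat.factorial_pos j)
      positivity
    have hch : (((r-2*j).choose (l-2*j) : ℕ) : ℝ) ≠ 0 := by
      have : 0 < (r-2*j).choose (l-2*j) := Nat.choose_pos (by omega)
      positivity
    rw [← f1, ← f2]
    rw [e3, ← e5]
    field_simp
  rw [Finset.sum_congr rfl key, ← Finset.mul_sum]
  have hF : ∑ j ∈ range (l/2+1), ((-1:ℝ)^j * cc l j * 2^(l-2*j) * ((k-j-1).factorial : ℝ))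
      = ((Fz k l : ℤ) : ℝ) := by
    unfold Fz
    push_cast
    rfl
  rw [hF, core l k hlk]
  have hG : ((Gz k l : ℤ) : ℝ) = ((k-l/2-1).factorial : ℝ) * 2^((l+1)/2) *
      ∏ i ∈ Finset.range (l / 2), (2 * (k : ℝ) - 2 * ((l + 1) / 2 : ℕ) - 1 - 2 * i) := by
    unfold Gz
    push_cast
    rfl
  rw [hG]
  ring
end

section
/- Specializing a = 1, b = 0 (so W_n = U_n and Ω = 1): for all integers k ≥ 1 and m, n ≥ 0, U_n^{2k} + U_{n+m}^{2k} = Σ_{r=0}^{k} θ_{k,r}(m) · U_n^r · U_{n+m}^r, where θ_{k,r}(m) = Σ_{0 ≤ 2j ≤ k, 2j ≤ r} (−1)^j · k·(k−j−1)!/(j!·(k−r)!·(r−2j)!) · V_m^{r−2j}·U_m^{2k−2r}. -/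
open Finset

noncomputable def wc (k j : ℕ) : ℝ :=
  (-1)^j * k * (k - j - 1).factorial / (j.factorial * (k - 2*j).factorial)

lemma coef_rec (i b : ℕ) :
    ((2*i+b+3 : ℕ) : ℝ) * (i+b+1).factorial / ((i+1).factorial * (b+1).factorial)
     = ((2*i+b+2 : ℕ) : ℝ) * (i+b).factorial / ((i+1).factorial * b.factorial)
     + ((2*i+b+1 : ℕ) : ℝ) * (i+b).factorial / (i.factorial * (b+1).factorial) := by
  have h1 : (i+b+1).factorial = (i+b+1) * (i+b).factorial := rfl
  have h2 : (i+1).factorial = (i+1) * i.factorial := rfl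
  have h3 : (b+1).factorial = (b+1) * b.factorial := rfl
  rw [h1, h2, h3]
  push_cast
  have hi : (i.factorial : ℝ) ≠ 0 := by positivity
  have hb : (b.factorial : ℝ) ≠ 0 := by positivity
  field_simp
  ring

lemma wc_step (k j : ℕ) (h : 2*j ≤ k) : wc (k+3) (j+1) = wc (k+2) (j+1) - wc (k+1) j := by
  obtain ⟨b, hb⟩ : ∃ b, k = 2*j + b := ⟨k - 2*j, by omega⟩
  subst hb
  unfold wc
  simp only [show 2*j+b+3 - (j+1) - 1 = j+b+1 from by omega,
    show 2*j+b+3 - 2*(j+1) = b+1 from by omega,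
    show 2*j+b+2 - (j+1) - 1 = j+b from by omega,
    show 2*j+b+2 - 2*(j+1) = b from by omega,
    show 2*j+b+1 - j - 1 = j+b from by omega,
    show 2*j+b+1 - 2*j = b+1 from by omega]
  have hcr := coef_rec j b
  push_cast at hcr ⊢
  linear_combination ((-1:ℝ)^(j+1)) * hcr

lemma wc_zero (k : ℕ) : wc (k+1) 0 = 1 := by
  unfold wc
  simp only [Nat.sub_zero, Nat.mul_zero, pow_zero, Nat.factorial_zero, one_mul]
  rw [show k+1-1 = k from by omega, Nat.factorial_succ]
  have : ((k+1 : ℕ) : ℝ) ≠ 0 := by positivity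
  push_cast
  field_simp

lemma wc_top (t : ℕ) : wc (2*t+4) (t+2) = - wc (2*t+2) (t+1) := by
  unfold wc
  simp only [show 2*t+4 - (t+2) - 1 = t+1 from by omega,
    show 2*t+4 - 2*(t+2) = 0 from by omega,
    show 2*t+2 - (t+1) - 1 = t from by omega,
    show 2*t+2 - 2*(t+1) = 0 from by omega,
    Nat.factorial_zero]
  rw [show (t+2).factorial = (t+2)*(t+1).factorial from rfl,
      show (t+1).factorial = (t+1)*t.factorial from rfl]
  have h1 : ((t:ℝ)+1) ≠ 0 := by positivity
  have h2 : ((t:ℝ)+2) ≠ 0 := by positivity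
  have h3 : (t.factorial : ℝ) ≠ 0 := by positivity
  push_cast
  field_simp
  ring

lemma waring_step (S T : ℝ) (k : ℕ) :
    S * (∑ j ∈ range ((k+2)/2+1), wc (k+2) j * S^(k+2-2*j) * T^j)
      - T * (∑ j ∈ range ((k+1)/2+1), wc (k+1) j * S^(k+1-2*j) * T^j)
    = ∑ j ∈ range ((k+3)/2+1), wc (k+3) j * S^(k+3-2*j) * T^j := by
  have hterm : ∀ j, 2*j ≤ k →
      S * (wc (k+2) (j+1) * S^(k+2-2*(j+1)) * T^(j+1)) - T * (wc (k+1) j * S^(k+1-2*j) * T^j)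
        = wc (k+3) (j+1) * S^(k+3-2*(j+1)) * T^(j+1) := by
    intro j hj
    rw [show k+3-2*(j+1) = (k-2*j)+1 from by omega,
        show k+2-2*(j+1) = k-2*j from by omega,
        show k+1-2*j = (k-2*j)+1 from by omega,
        wc_step k j hj]
    ring
  have h0 : S * (wc (k+2) 0 * S^(k+2-2*0) * T^0) = wc (k+3) 0 * S^(k+3-2*0) * T^0 := by
    rw [show (k+2) = (k+1)+1 from rfl, wc_zero (k+1)]
    rw [show (k+1)+1+1 = (k+2)+1 from rfl, wc_zero (k+2)]
    rw [Nat.mul_zero, Nat.sub_zero, Nat.sub_zero, pow_zero]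
    ring
  rcases Nat.even_or_odd k with he | ho
  · obtain ⟨u, hu⟩ := he
    rw [show (k+2)/2+1 = u+2 from by omega, show (k+1)/2+1 = u+1 from by omega,
        show (k+3)/2+1 = u+2 from by omega]
    rw [Finset.sum_range_succ' (fun j => wc (k+2) j * S^(k+2-2*j) * T^j) (u+1),
        Finset.sum_range_succ' (fun j => wc (k+3) j * S^(k+3-2*j) * T^j) (u+1)]
    rw [mul_add, Finset.mul_sum, Finset.mul_sum]
    have hs : ∑ j ∈ range (u+1), (S * (wc (k+2) (j+1) * S^(k+2-2*(j+1)) * T^(j+1))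
          - T * (wc (k+1) j * S^(k+1-2*j) * T^j))
        = ∑ j ∈ range (u+1), wc (k+3) (j+1) * S^(k+3-2*(j+1)) * T^(j+1) :=
      Finset.sum_congr rfl (fun j hj => hterm j (by simp at hj; omega))
    rw [Finset.sum_sub_distrib] at hs
    linarith [hs, h0]
  · obtain ⟨u, hu⟩ := ho
    rw [show (k+2)/2+1 = u+2 from by omega, show (k+1)/2+1 = u+2 from by omega,
        show (k+3)/2+1 = u+3 from by omega]
    rw [Finset.sum_range_succ' (fun j => wc (k+3) j * S^(k+3-2*j) * T^j) (u+2),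
        Finset.sum_range_succ' (fun j => wc (k+2) j * S^(k+2-2*j) * T^j) (u+1)]
    rw [Finset.sum_range_succ (fun j => wc (k+3) (j+1) * S^(k+3-2*(j+1)) * T^(j+1)) (u+1),
        Finset.sum_range_succ (fun j => wc (k+1) j * S^(k+1-2*j) * T^j) (u+1)]
    have htop : wc (k+3) (u+2) * S^(k+3-2*(u+2)) * T^(u+2)
        = - (T * (wc (k+1) (u+1) * S^(k+1-2*(u+1)) * T^(u+1))) := by
      rw [show k+3 = 2*u+4 from by omega, show k+1 = 2*u+2 from by omega,
          show 2*u+4-2*(u+2) = 0 from by omega, show 2*u+2-2*(u+1) = 0 from by omega,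
          wc_top u]
      ring
    rw [mul_add, Finset.mul_sum, mul_add, Finset.mul_sum]
    have hs : ∑ j ∈ range (u+1), (S * (wc (k+2) (j+1) * S^(k+2-2*(j+1)) * T^(j+1))
          - T * (wc (k+1) j * S^(k+1-2*j) * T^j))
        = ∑ j ∈ range (u+1), wc (k+3) (j+1) * S^(k+3-2*(j+1)) * T^(j+1) :=
      Finset.sum_congr rfl (fun j hj => hterm j (by simp at hj; omega))
    rw [Finset.sum_sub_distrib] at hs
    linarith [hs, h0, htop]

lemma waring (X Y : ℝ) : ∀ k : ℕ,
    X^(k+1) + Y^(k+1)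
      = ∑ j ∈ range ((k+1)/2+1), wc (k+1) j * (X+Y)^(k+1-2*j) * (X*Y)^j := by
  have key : ∀ k : ℕ,
      (X^(k+1) + Y^(k+1) = ∑ j ∈ range ((k+1)/2+1), wc (k+1) j * (X+Y)^(k+1-2*j) * (X*Y)^j)
      ∧ (X^(k+2) + Y^(k+2) = ∑ j ∈ range ((k+2)/2+1), wc (k+2) j * (X+Y)^(k+2-2*j) * (X*Y)^j) := by
    intro k
    induction k with
    | zero =>
      constructor
      · simp [Finset.sum_range_one, wc_zero 0]
      · rw [show (0+2)/2+1 = 2 from rfl, Finset.sum_range_succ, Finset.sum_range_one]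
        have h1 : wc 2 0 = 1 := wc_zero 1
        have h2 : wc 2 1 = -2 := by
          unfold wc; norm_num [Nat.factorial]
        rw [h1, h2]
        norm_num
        ring
    | succ k ih =>
      refine ⟨ih.2, ?_⟩
      have hrec : X^(k+3) + Y^(k+3)
          = (X+Y) * (X^(k+2) + Y^(k+2)) - (X*Y) * (X^(k+1) + Y^(k+1)) := by ring
      rw [hrec, ih.1, ih.2, waring_step (X+Y) (X*Y) k]
  exact fun k => (key k).1

lemma waring_expand (c d x y : ℝ) (h : x^2 + y^2 = c*(x*y) + d) (k : ℕ) (hk : 1 ≤ k) :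
    x^(2*k) + y^(2*k) = ∑ r ∈ range (k+1), (∑ j ∈ range (r/2+1),
      ((-1:ℝ)^j * k * (k-j-1).factorial / (j.factorial * (k-r).factorial * (r-2*j).factorial))
        * c^(r-2*j) * d^(k-r)) * (x*y)^r := by
  obtain ⟨k', rfl⟩ : ∃ k', k = k'+1 := ⟨k-1, by omega⟩
  have key := waring (x^2) (y^2) k'
  rw [← pow_mul, ← pow_mul, h, ← mul_pow] at key
  rw [key]
  -- expand the binomial inside
  have expand : ∀ j ∈ range ((k'+1)/2+1),
      wc (k'+1) j * (c*(x*y)+d)^(k'+1-2*j) * ((x*y)^2)^j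
        = ∑ i ∈ range ((k'+1-2*j)+1),
            wc (k'+1) j * ((c*(x*y))^i * d^(k'+1-2*j-i) * ((k'+1-2*j).choose i : ℝ))
              * ((x*y)^2)^j := by
    intro j hj
    rw [add_pow, Finset.mul_sum, Finset.sum_mul]
  rw [Finset.sum_congr rfl expand]
  -- distribute (x*y)^r into the inner sum on the RHS
  have distrib : ∀ r ∈ range (k'+1+1),
      (∑ j ∈ range (r/2+1),
        ((-1:ℝ)^j * ((k'+1:ℕ):ℝ) * (k'+1-j-1).factorial / (j.factorial * (k'+1-r).factorial * (r-2*j).factorial))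
          * c^(r-2*j) * d^(k'+1-r)) * (x*y)^r
      = ∑ j ∈ range (r/2+1),
        ((-1:ℝ)^j * ((k'+1:ℕ):ℝ) * (k'+1-j-1).factorial / (j.factorial * (k'+1-r).factorial * (r-2*j).factorial))
          * c^(r-2*j) * d^(k'+1-r) * (x*y)^r := by
    intro r hr
    rw [Finset.sum_mul]
  rw [Finset.sum_congr rfl distrib]
  rw [Finset.sum_sigma' (range ((k'+1)/2+1)) _
      (fun j i => wc (k'+1) j * ((c*(x*y))^i * d^(k'+1-2*j-i) * ((k'+1-2*j).choose i : ℝ)) * ((x*y)^2)^j),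
    Finset.sum_sigma' (range (k'+1+1)) _
      (fun r j => ((-1:ℝ)^j * ((k'+1:ℕ):ℝ) * (k'+1-j-1).factorial / (j.factorial * (k'+1-r).factorial * (r-2*j).factorial))
          * c^(r-2*j) * d^(k'+1-r) * (x*y)^r)]
  set K := k'+1 with hK
  refine Finset.sum_nbij' (fun p => ⟨p.2 + 2*p.1, p.1⟩) (fun q => ⟨q.2, q.1 - 2*q.2⟩)
    ?_ ?_ ?_ ?_ ?_
  · rintro ⟨j, i⟩ hm
    simp only [Finset.mem_sigma, Finset.mem_range] at hm ⊢
    omega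
  · rintro ⟨r, j⟩ hm
    simp only [Finset.mem_sigma, Finset.mem_range] at hm ⊢
    omega
  · rintro ⟨j, i⟩ hm
    simp only
    rw [show i + 2*j - 2*j = i from by omega]
  · rintro ⟨r, j⟩ hm
    simp only [Finset.mem_sigma, Finset.mem_range] at hm
    simp only
    rw [show r - 2*j + 2*j = r from by omega]
  · rintro ⟨j, i⟩ hm
    simp only [Finset.mem_sigma, Finset.mem_range] at hm
    simp only
    have h2j : 2*j ≤ K := by omega
    have hiK : i + 2*j ≤ K := by omega
    rw [show i + 2*j - 2*j = i from by omega,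
        show K - (i + 2*j) = K - 2*j - i from by omega]
    rw [Nat.cast_choose ℝ (show i ≤ K - 2*j from by omega)]
    unfold wc
    rw [mul_pow c (x*y) i, ← pow_mul (x*y) 2 j]
    have hf1 : (Nat.factorial i : ℝ) ≠ 0 := by positivity
    have hf2 : (Nat.factorial (K-2*j-i) : ℝ) ≠ 0 := by positivity
    have hf3 : (Nat.factorial j : ℝ) ≠ 0 := by positivity
    have hf4 : (Nat.factorial (K-2*j) : ℝ) ≠ 0 := by positivity
    field_simp
    ring

/-- Specialization `a = 1`, `b = 0` (so `W = U`, `Ω = 1`) of the main theorem: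
`Uₙ^{2k} + U_{n+m}^{2k} = Σ_{r=0}^{k} θ_{k,r}(m) Uₙʳ U_{n+m}ʳ`. -/
theorem stmt_16 (p : ℝ) (U V : ℕ → ℝ)
    (hU0 : U 0 = 0) (hU1 : U 1 = 1)
    (hUrec : ∀ n, U (n + 2) = p * U (n + 1) - U n)
    (hV0 : V 0 = 2) (hV1 : V 1 = p)
    (hVrec : ∀ n, V (n + 2) = p * V (n + 1) - V n) :
    ∀ (k : ℕ), 1 ≤ k → ∀ m n : ℕ,
      U n ^ (2 * k) + U (n + m) ^ (2 * k) =
        ∑ r ∈ Finset.range (k + 1),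
          (∑ j ∈ Finset.range (r / 2 + 1),
            ((-1 : ℝ) ^ j * k * (k - j - 1).factorial /
              (j.factorial * (k - r).factorial * (r - 2 * j).factorial)) *
              V m ^ (r - 2 * j) * U m ^ (2 * k - 2 * r)) *
            U n ^ r * U (n + m) ^ r := by
  -- V in terms of U
  have hVU : ∀ m, V m = 2 * U (m+1) - p * U m := by
    have key : ∀ m, V m = 2 * U (m+1) - p * U m ∧ V (m+1) = 2 * U (m+2) - p * U (m+1) := by
      intro m
      induction m with
      | zero =>
        refine ⟨by rw [hV0, hU1, hU0]; ring, ?_⟩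
        rw [hV1, hUrec 0, hU1, hU0]; ring
      | succ m ih =>
        refine ⟨ih.2, ?_⟩
        rw [show m+1+1 = m+2 from rfl, show m+1+2 = m+3 from rfl]
        have e3 : U (m+3) = p * U (m+2) - U (m+1) := hUrec (m+1)
        linear_combination (hVrec m) + p * ih.2 - ih.1 - 2 * e3 + p * (hUrec m)
    exact fun m => (key m).1
  -- determinant identity
  have hdet : ∀ m, U (m+1)^2 - p * U m * U (m+1) + U m^2 = 1 := by
    intro m
    induction m with
    | zero => rw [hU0, hU1]; ring
    | succ m ih =>
      rw [show m+1+1 = m+2 from rfl]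
      linear_combination ih + (U (m+2) - U m) * (hUrec m)
  intro k hk m n
  -- the quadratic invariant
  have main : ∀ n : ℕ,
      (U n^2 + U (n+m)^2 - V m * (U n * U (n+m)) = U m^2) ∧
      (U (n+1)^2 + U (n+m+1)^2 - V m * (U (n+1) * U (n+m+1)) = U m^2) ∧
      (2*U (n+1)*U n + 2*U (n+m+1)*U (n+m)
        - V m*(U (n+1)*U (n+m) + U n * U (n+m+1)) = p * U m^2) := by
    intro n
    induction n with
    | zero =>
      simp only [Nat.zero_add]
      refine ⟨by rw [hU0]; ring, ?_, ?_⟩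
      · rw [hU1]
        linear_combination - (hdet m) - U (m+1) * (hVU m)
      · rw [hU0, hU1]
        linear_combination (-(U m)) * (hVU m)
    | succ n ih =>
      obtain ⟨h1, h2, h3⟩ := ih
      refine ⟨?_, ?_, ?_⟩
      · rw [show n+1+m = n+m+1 from by omega]; exact h2
      · rw [show n+1+1 = n+2 from rfl, show n+1+m+1 = n+m+2 from by omega]
        rw [hUrec n, hUrec (n+m)]
        linear_combination p^2 * h2 + h1 - p * h3
      · rw [show n+1+1 = n+2 from rfl, show n+1+m+1 = n+m+2 from by omega,
            show n+1+m = n+m+1 from by omega]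
        rw [hUrec n, hUrec (n+m)]
        linear_combination 2 * p * h2 - h3
  have hq : U n^2 + U (n+m)^2 = V m * (U n * U (n+m)) + U m^2 := by
    linear_combination (main n).1
  have key := waring_expand (V m) (U m ^ 2) (U n) (U (n+m)) hq k hk
  rw [key]
  refine Finset.sum_congr rfl (fun r hr => ?_)
  have hrk : r ≤ k := by simp at hr; omega
  have hd : (U m ^ 2)^(k-r) = U m ^ (2*k-2*r) := by
    rw [← pow_mul]
    congr 1
    omega
  simp only [hd]
  rw [mul_pow, ← mul_assoc]
end
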